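/- Let 𝒮 ⊆ X × Y be the set of pairs (x*,y*) with 0 ∈ ∇f(x*) + ∂g(x*) + M*y* and 0 ∈ -Mx* + ∂h*(y*), and let 𝑺 ⊆ X × 𝒀 be the set of pairs (x*,𝒚*) with 0 ∈ ∇f(x*) + ∂g(x*) + K*𝒚* and 0 ∈ -Kx* + ∂h̄*(𝒚*), where h̄ = h∘(D(m)S) and M = D(m)SK. Let G : X × Y → X × 𝒀 map (x,y) to (x, 𝒚) with 𝒚^{(j)}(i) = y^{(j)} for all i ∈ I(j). Then 𝑺 = G(𝒮). -/

import Mathlib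

/-!
Write `h̄ = h ∘ Σ`, where `Σ = D(m) S` sums each block of `𝒀`. The map `Σ` is surjective and its
adjoint is the blockwise copy `L : Y → 𝒀` appearing in `G`, so `h̄*(L w) = h*(w)`. Off the range of
`L`, `h̄* = +∞`: such a `φ` pairs nontrivially with some direction of `ker Σ`, along which `h̄` is
constant. As `h` is proper, closed and convex, it has an affine minorant, so `h*` is somewhere
finite; a point of `∂h̄*` therefore cannot lie where `h̄* = +∞`, i.e. the dual part of every point
of `𝑺` is `L y` for some `y`. At such points the two optimality systems coincide.
-/

open Finset
open scoped InnerProductSpace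

/-- Fenchel conjugate of an extended-real-valued function with respect to a given
real pairing: `F*(φ) = sup_y ⟨φ, y⟩ - F(y)`. -/
noncomputable def conjP {E : Type*} (pair : E → E → ℝ) (F : E → EReal) (φ : E) : EReal :=
  ⨆ y, ((pair φ y : ℝ) : EReal) - F y

/-- Subdifferential of an extended-real-valued function with respect to a given real
pairing: `u ∈ ∂F(x)` iff `F(ψ) ≥ F(x) + ⟨u, ψ - x⟩` for all `ψ`. -/
def subdiffP {E : Type*} [AddCommGroup E] (pair : E → E → ℝ) (F : E → EReal) (x : E) :
    Set E :=
  {u | ∀ ψ, F x + ((pair u (ψ - x) : ℝ) : EReal) ≤ F ψ}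

section Conjugate

variable {E F : Type*}

theorem conjP_comp_of_surjective (pairE : E → E → ℝ) (pairF : F → F → ℝ) (h : F → EReal)
    {T : E → F} (hT : Function.Surjective T) {L : F → E}
    (hL : ∀ w e, pairE (L w) e = pairF w (T e)) (w : F) :
    conjP pairE (h ∘ T) (L w) = conjP pairF h w := by
  simp only [conjP, Function.comp_apply, hL]
  exact hT.iSup_comp fun y => ((pairF w y : ℝ) : EReal) - h y

theorem conjP_eq_top_of_invariant [AddCommGroup E] [Module ℝ E] (pair : E → E → ℝ)
    {F : E → EReal} {φ x e : E} (hx : F x ≠ ⊤) (hF : ∀ t : ℝ, F (x + t • e) = F x)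
    (hlin : ∀ t : ℝ, pair φ (x + t • e) = pair φ x + t * pair φ e) (he : pair φ e ≠ 0) :
    conjP pair F φ = ⊤ := by
  rw [conjP, iSup_eq_top]
  intro b hb
  obtain ⟨r, hbr, -⟩ := EReal.exists_between_coe_real hb
  induction hFx : F x using EReal.rec with
  | bot => exact ⟨x, by simpa [hFx] using hb⟩
  | top => exact absurd hFx hx
  | coe ρ =>
    refine ⟨x + ((r + ρ - pair φ x) / pair φ e) • e, ?_⟩
    rw [hF, hFx, hlin, div_mul_cancel₀ _ he, ← EReal.coe_sub]
    convert hbr using 2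
    ring

theorem conjP_ne_top_of_le (pair : E → E → ℝ) {F : E → EReal} {w : E} (b : ℝ)
    (hF : ∀ y, ((pair w y + b : ℝ) : EReal) ≤ F y) : conjP pair F w ≠ ⊤ := by
  refine ne_top_of_le_ne_top (EReal.coe_ne_top (-b)) (iSup_le fun y => ?_)
  calc ((pair w y : ℝ) : EReal) - F y ≤ ((pair w y : ℝ) : EReal) - ((pair w y + b : ℝ) : EReal) :=
        EReal.sub_le_sub le_rfl (hF y)
    _ = ((-b : ℝ) : EReal) := by rw [← EReal.coe_sub]; ring_nf

theorem ne_top_of_mem_subdiffP [AddCommGroup E] {pair : E → E → ℝ} {F : E → EReal} {x u ψ : E}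
    (hu : u ∈ subdiffP pair F x) (hψ : F ψ ≠ ⊤) : F x ≠ ⊤ := by
  intro hx
  exact hψ (by simpa [hx] using hu ψ)

theorem mem_subdiffP_iff_of_eq_top_off_range [AddCommGroup E] [AddCommGroup F]
    {𝓕 : Type*} [FunLike 𝓕 F E] [AddMonoidHomClass 𝓕 F E]
    {pairE : E → E → ℝ} {pairF : F → F → ℝ} {Φ : E → EReal} {Ψ : F → EReal} (L : 𝓕)
    (hΦL : ∀ w, Φ (L w) = Ψ w) (hΦ : ∀ φ ∉ Set.range L, Φ φ = ⊤) {a : E} {b : F}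
    (hab : ∀ v, pairE a (L v) = pairF b v) (y : F) :
    a ∈ subdiffP pairE Φ (L y) ↔ b ∈ subdiffP pairF Ψ y := by
  constructor
  · intro ha v
    simpa only [hΦL, ← map_sub, hab] using ha (L v)
  · intro hb ψ
    by_cases hψ : ψ ∈ Set.range L
    · obtain ⟨v, rfl⟩ := hψ
      simpa only [hΦL, ← map_sub, hab] using hb v
    · rw [hΦ ψ hψ]
      exact le_top

end Conjugate

section AffineMinorant

variable {E : Type*} {h : E → EReal}

theorem convex_setOf_le_coe [AddCommGroup E] [Module ℝ E]
    (hconv : ∀ (y z : E) (t : ℝ), 0 ≤ t → t ≤ 1 →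
      h (t • y + (1 - t) • z) ≤ ((t : ℝ) : EReal) * h y + (((1 - t : ℝ)) : EReal) * h z) :
    Convex ℝ {q : E × ℝ | h q.1 ≤ q.2} := by
  intro q hq r hr a b ha hb hab
  obtain rfl : b = 1 - a := by linarith
  calc h (a • q.1 + (1 - a) • r.1)
      ≤ ((a : ℝ) : EReal) * h q.1 + (((1 - a : ℝ)) : EReal) * h r.1 := hconv _ _ a ha (by linarith)
    _ ≤ ((a : ℝ) : EReal) * (q.2 : EReal) + (((1 - a : ℝ)) : EReal) * (r.2 : EReal) :=
      add_le_add (mul_le_mul_of_nonneg_left hq (EReal.coe_nonneg.2 ha))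
        (mul_le_mul_of_nonneg_left hr (EReal.coe_nonneg.2 hb))
    _ = ((a • q + (1 - a) • r).2 : EReal) := by
      rw [← EReal.coe_mul, ← EReal.coe_mul, ← EReal.coe_add]; rfl

theorem LowerSemicontinuous.isClosed_setOf_le_coe [TopologicalSpace E]
    (hlsc : LowerSemicontinuous h) : IsClosed {q : E × ℝ | h q.1 ≤ q.2} :=
  hlsc.isClosed_epigraph.preimage (continuous_id.prodMap continuous_coe_real_ereal)

theorem exists_continuousLinearMap_add_le [AddCommGroup E] [Module ℝ E] [TopologicalSpace E]
    [IsTopologicalAddGroup E] [ContinuousSMul ℝ E] [LocallyConvexSpace ℝ E]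
    (hproper : ∃ y, h y ≠ ⊤) (hnebot : ∀ y, h y ≠ ⊥)
    (hconv : ∀ (y z : E) (t : ℝ), 0 ≤ t → t ≤ 1 →
      h (t • y + (1 - t) • z) ≤ ((t : ℝ) : EReal) * h y + (((1 - t : ℝ)) : EReal) * h z)
    (hlsc : LowerSemicontinuous h) :
    ∃ (φ : E →L[ℝ] ℝ) (b : ℝ), ∀ y, ((φ y + b : ℝ) : EReal) ≤ h y := by
  obtain ⟨y₀, hy₀⟩ := hproper
  lift h y₀ to ℝ using ⟨hy₀, hnebot y₀⟩ with r₀ hr₀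
  obtain ⟨L, u, hLu, hsep⟩ := geometric_hahn_banach_point_closed (convex_setOf_le_coe hconv)
    hlsc.isClosed_setOf_le_coe (x := (y₀, r₀ - 1))
    (by
      show ¬ h y₀ ≤ ((r₀ - 1 : ℝ) : EReal)
      rw [← hr₀, EReal.coe_le_coe_iff, not_le]
      exact sub_one_lt r₀)
  have hL : ∀ y t, L (y, t) = L (y, 0) + t * L (0, 1) := fun y t => by
    rw [← smul_eq_mul, ← map_smul, ← map_add, Prod.smul_mk, smul_zero, smul_eq_mul, mul_one,
      Prod.mk_add_mk, add_zero, zero_add]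
  have ha : 0 < L (0, 1) := by
    have := hsep (y₀, r₀) (by simp [← hr₀])
    rw [hL] at this hLu
    linarith
  refine ⟨-(L (0, 1))⁻¹ • L.comp (.inl ℝ E ℝ), u / L (0, 1), fun y => ?_⟩
  induction hy : h y using EReal.rec with
  | bot => exact absurd hy (hnebot y)
  | top => exact le_top
  | coe s =>
    have hs := hsep (y, s) (by simp [hy])
    rw [hL] at hs
    have : (u - L (y, 0)) / L (0, 1) ≤ s := by rw [div_le_iff₀ ha]; linarith
    refine EReal.coe_le_coe_iff.2 (le_of_eq_of_le ?_ this)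
    simp only [FunLike.coe_smul, Pi.smul_apply, ContinuousLinearMap.comp_apply,
      ContinuousLinearMap.inl_apply, smul_eq_mul]
    ring

end AffineMinorant

theorem exists_eq_sum_inner {ι : Type*} [Fintype ι] [DecidableEq ι] {Ys : ι → Type*}
    [∀ j, NormedAddCommGroup (Ys j)] [∀ j, InnerProductSpace ℝ (Ys j)] [∀ j, CompleteSpace (Ys j)]
    (φ : (∀ j, Ys j) →L[ℝ] ℝ) : ∃ w : ∀ j, Ys j, ∀ y, φ y = ∑ j, ⟪w j, y j⟫_ℝ := by
  refine ⟨fun j => (InnerProductSpace.toDual ℝ (Ys j)).symm (φ.comp (.single ℝ Ys j)), fun y => ?_⟩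
  conv_lhs => rw [← univ_sum_single y, map_sum]
  simp [InnerProductSpace.toDual_symm_apply]

theorem exists_conjP_sum_inner_ne_top {ι : Type*} [Fintype ι] [DecidableEq ι] {Ys : ι → Type*}
    [∀ j, NormedAddCommGroup (Ys j)] [∀ j, InnerProductSpace ℝ (Ys j)] [∀ j, CompleteSpace (Ys j)]
    {h : (∀ j, Ys j) → EReal} (hproper : ∃ y, h y ≠ ⊤) (hnebot : ∀ y, h y ≠ ⊥)
    (hconv : ∀ (y z : ∀ j, Ys j) (t : ℝ), 0 ≤ t → t ≤ 1 →
      h (t • y + (1 - t) • z) ≤ ((t : ℝ) : EReal) * h y + (((1 - t : ℝ)) : EReal) * h z)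
    (hlsc : LowerSemicontinuous h) :
    ∃ w, conjP (fun y z => ∑ j, ⟪y j, z j⟫_ℝ) h w ≠ ⊤ := by
  obtain ⟨φ, b, hφ⟩ := exists_continuousLinearMap_add_le hproper hnebot hconv hlsc
  obtain ⟨w, hw⟩ := exists_eq_sum_inner φ
  exact ⟨w, conjP_ne_top_of_le _ b fun y => hw y ▸ hφ y⟩

section Blocks

variable {n p : ℕ} {Ys : Fin p → Type*} [∀ j, NormedAddCommGroup (Ys j)]
  [∀ j, InnerProductSpace ℝ (Ys j)] (I : Fin p → Finset (Fin n))

/-- `blockSum I` is the paper's `D(m) S`; `blockLift I`, its adjoint for `blockInner I`, is the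
second component of `G`. -/
def blockSum : (∀ j, {i // i ∈ I j} → Ys j) →ₗ[ℝ] ∀ j, Ys j where
  toFun yy j := ∑ i ∈ (I j).attach, yy j i
  map_add' _ _ := by ext; simp [sum_add_distrib]
  map_smul' _ _ := by ext; simp [smul_sum]

def blockLift : (∀ j, Ys j) →ₗ[ℝ] ∀ j, {i // i ∈ I j} → Ys j where
  toFun y j _ := y j
  map_add' _ _ := rfl
  map_smul' _ _ := rfl

def blockInner (u v : ∀ j, {i // i ∈ I j} → Ys j) : ℝ :=
  ∑ j, ∑ i ∈ (I j).attach, ⟪u j i, v j i⟫_ℝ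

variable {I}

theorem blockSum_apply (yy : ∀ j, {i // i ∈ I j} → Ys j) (j : Fin p) :
    blockSum I yy j = ∑ i ∈ (I j).attach, yy j i := rfl

theorem blockLift_apply (y : ∀ j, Ys j) (j : Fin p) (i : {i // i ∈ I j}) :
    blockLift I y j i = y j := rfl

theorem blockSum_blockLift (y : ∀ j, Ys j) (j : Fin p) :
    blockSum I (blockLift I y) j = ((I j).card : ℝ) • y j := by
  simp [blockSum_apply, blockLift_apply, Nat.cast_smul_eq_nsmul]

theorem blockSum_surjective (hI : ∀ j, (I j).Nonempty) :
    Function.Surjective (blockSum I : _ → ∀ j, Ys j) := fun y =>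
  ⟨blockLift I fun j => ((I j).card : ℝ)⁻¹ • y j, funext fun j => by
    rw [blockSum_blockLift, smul_inv_smul₀ (Nat.cast_ne_zero.2 (hI j).card_ne_zero)]⟩

theorem blockInner_blockLift_left (w : ∀ j, Ys j) (u : ∀ j, {i // i ∈ I j} → Ys j) :
    blockInner I (blockLift I w) u = ∑ j, ⟪w j, blockSum I u j⟫_ℝ := by
  simp [blockInner, blockLift_apply, blockSum_apply, inner_sum]

theorem blockInner_blockLift_right (u : ∀ j, {i // i ∈ I j} → Ys j) (w : ∀ j, Ys j) :
    blockInner I u (blockLift I w) = ∑ j, ⟪blockSum I u j, w j⟫_ℝ := by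
  simp [blockInner, blockLift_apply, blockSum_apply, sum_inner]

theorem blockInner_add_left (u v w : ∀ j, {i // i ∈ I j} → Ys j) :
    blockInner I (u + v) w = blockInner I u w + blockInner I v w := by
  simp [blockInner, inner_add_left, sum_add_distrib]

theorem blockInner_add_smul_right (u v w : ∀ j, {i // i ∈ I j} → Ys j) (t : ℝ) :
    blockInner I u (v + t • w) = blockInner I u v + t * blockInner I u w := by
  simp [blockInner, inner_add_right, inner_smul_right, sum_add_distrib, mul_sum]

theorem blockInner_self_pos {u : ∀ j, {i // i ∈ I j} → Ys j} (hu : u ≠ 0) :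
    0 < blockInner I u u := by
  obtain ⟨j, hj⟩ := Function.ne_iff.1 hu
  obtain ⟨i, hi⟩ := Function.ne_iff.1 hj
  refine sum_pos' (fun j _ => sum_nonneg fun i _ => real_inner_self_nonneg)
    ⟨j, mem_univ j, sum_pos' (fun i _ => real_inner_self_nonneg)
      ⟨i, mem_attach _ i, real_inner_self_pos.2 hi⟩⟩

theorem exists_blockSum_eq_zero_blockInner_ne_zero (hI : ∀ j, (I j).Nonempty)
    {φ : ∀ j, {i // i ∈ I j} → Ys j} (hφ : φ ∉ Set.range (blockLift I)) :
    ∃ e, blockSum I e = 0 ∧ blockInner I φ e ≠ 0 := by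
  set a : ∀ j, Ys j := fun j => ((I j).card : ℝ)⁻¹ • blockSum I φ j
  -- `e` is the orthogonal projection of `φ` onto `ker (blockSum I)`.
  set e := φ - blockLift I a
  have he : e ≠ 0 := sub_ne_zero.2 fun h => hφ ⟨a, h.symm⟩
  have hsum : blockSum I e = 0 := funext fun j => by
    rw [map_sub, Pi.sub_apply, blockSum_blockLift,
      smul_inv_smul₀ (Nat.cast_ne_zero.2 (hI j).card_ne_zero), sub_self, Pi.zero_apply]
  refine ⟨e, hsum, ?_⟩
  rw [← sub_add_cancel φ (blockLift I a), blockInner_add_left, blockInner_blockLift_left, hsum]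
  simpa using (blockInner_self_pos he).ne'

theorem blockSum_eq_sum {u : ∀ j, Fin n → Ys j} (hu : ∀ j i, i ∉ I j → u j i = 0) :
    blockSum I (fun j i => u j i.1) = fun j => ∑ i, u j i := funext fun j => by
  rw [blockSum_apply, sum_attach (I j) (u j)]
  exact sum_subset (subset_univ _) fun i _ hi => hu j i hi

theorem conjP_comp_blockSum_blockLift (hI : ∀ j, (I j).Nonempty) (h : (∀ j, Ys j) → EReal)
    (w : ∀ j, Ys j) :
    conjP (blockInner I) (h ∘ blockSum I) (blockLift I w)
      = conjP (fun y z => ∑ j, ⟪y j, z j⟫_ℝ) h w :=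
  conjP_comp_of_surjective _ _ h (blockSum_surjective hI) blockInner_blockLift_left w

theorem conjP_comp_blockSum_eq_top (hI : ∀ j, (I j).Nonempty) {h : (∀ j, Ys j) → EReal}
    (hh : ∃ y, h y ≠ ⊤) {φ : ∀ j, {i // i ∈ I j} → Ys j} (hφ : φ ∉ Set.range (blockLift I)) :
    conjP (blockInner I) (h ∘ blockSum I) φ = ⊤ := by
  obtain ⟨y, hy⟩ := hh
  obtain ⟨x, rfl⟩ := blockSum_surjective hI y
  obtain ⟨e, he, hφe⟩ := exists_blockSum_eq_zero_blockInner_ne_zero hI hφ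
  exact conjP_eq_top_of_invariant _ hy (fun t => by simp [he])
    (blockInner_add_smul_right φ x e) hφe

theorem mem_subdiffP_conjP_comp_blockSum_iff (hI : ∀ j, (I j).Nonempty)
    {h : (∀ j, Ys j) → EReal} (hh : ∃ y, h y ≠ ⊤) {a : ∀ j, {i // i ∈ I j} → Ys j}
    {b : ∀ j, Ys j} (hab : ∀ v, blockInner I a (blockLift I v) = ∑ j, ⟪b j, v j⟫_ℝ)
    (y : ∀ j, Ys j) :
    a ∈ subdiffP (blockInner I) (conjP (blockInner I) (h ∘ blockSum I)) (blockLift I y)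
      ↔ b ∈ subdiffP (fun y z => ∑ j, ⟪y j, z j⟫_ℝ)
          (conjP (fun y z => ∑ j, ⟪y j, z j⟫_ℝ) h) y :=
  mem_subdiffP_iff_of_eq_top_off_range (blockLift I) (conjP_comp_blockSum_blockLift hI h)
    (fun _ => conjP_comp_blockSum_eq_top hI hh) hab y

theorem mem_range_blockLift_of_mem_subdiffP (hI : ∀ j, (I j).Nonempty)
    {h : (∀ j, Ys j) → EReal} (hh : ∃ y, h y ≠ ⊤) {w : ∀ j, Ys j}
    (hw : conjP (fun y z => ∑ j, ⟪y j, z j⟫_ℝ) h w ≠ ⊤) {a φ : ∀ j, {i // i ∈ I j} → Ys j}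
    (ha : a ∈ subdiffP (blockInner I) (conjP (blockInner I) (h ∘ blockSum I)) φ) :
    φ ∈ Set.range (blockLift I) := by
  by_contra hφ
  refine ne_top_of_mem_subdiffP ha (ψ := blockLift I w) ?_ (conjP_comp_blockSum_eq_top hI hh hφ)
  rwa [conjP_comp_blockSum_blockLift hI]

end Blocks

theorem stmt9_general {n p : ℕ}
    (Xs : Fin n → Type) (Ys : Fin p → Type)
    [∀ i, NormedAddCommGroup (Xs i)] [∀ i, InnerProductSpace ℝ (Xs i)]
    [∀ i, FiniteDimensional ℝ (Xs i)]
    [∀ j, NormedAddCommGroup (Ys j)] [∀ j, InnerProductSpace ℝ (Ys j)]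
    [∀ j, FiniteDimensional ℝ (Ys j)]
    (Mb : ∀ j i, Xs i →L[ℝ] Ys j)
    (I : Fin p → Finset (Fin n)) (hI : ∀ j i, i ∈ I j ↔ Mb j i ≠ 0)
    (hm : ∀ j, 1 ≤ (I j).card)
    -- f convex differentiable with gradient gradf:
    (gradf : (∀ i, Xs i) → ∀ i, Xs i)
    -- g proper (here extended-real-valued):
    (g : (∀ i, Xs i) → EReal)
    -- h proper closed convex:
    (h : (∀ j, Ys j) → EReal)
    (hproper : ∃ y, h y ≠ ⊤) (hnebot : ∀ y, h y ≠ ⊥)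
    (hconv : ∀ (y z : ∀ j, Ys j) (t : ℝ), 0 ≤ t → t ≤ 1 →
      h (t • y + (1 - t) • z) ≤ ((t : ℝ) : EReal) * h y + (((1 - t : ℝ)) : EReal) * h z)
    (hlsc : LowerSemicontinuous h)
    -- the pairings on X, Y and 𝒀, and h̄ = h ∘ (D(m)S):
    (pairX : (∀ i, Xs i) → (∀ i, Xs i) → ℝ)
    (pairY : (∀ j, Ys j) → (∀ j, Ys j) → ℝ)
    (hpairY : ∀ y z, pairY y z = ∑ j, @inner ℝ _ _ (y j) (z j))
    (pairYY : (∀ j, {i // i ∈ I j} → Ys j) → (∀ j, {i // i ∈ I j} → Ys j) → ℝ)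
    (hpairYY : ∀ u v, pairYY u v = ∑ j, ∑ i ∈ (I j).attach, @inner ℝ _ _ (u j i) (v j i))
    (hbar : (∀ j, {i // i ∈ I j} → Ys j) → EReal)
    (hhbar : ∀ yy, hbar yy = h (fun j =>
      ((I j).card : ℝ) • (((I j).card : ℝ)⁻¹ • ∑ i ∈ (I j).attach, yy j i)))
    -- the two saddle-point sets and the map G:
    (Sset : Set ((∀ i, Xs i) × (∀ j, Ys j)))
    (hSset : Sset = {z | (fun i => -(gradf z.1 i)
          - ∑ j, ContinuousLinearMap.adjoint (Mb j i) (z.2 j)) ∈ subdiffP pairX g z.1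
        ∧ (fun j => ∑ i, Mb j i (z.1 i)) ∈ subdiffP pairY (conjP pairY h) z.2})
    (BSset : Set ((∀ i, Xs i) × (∀ j, {i // i ∈ I j} → Ys j)))
    (hBSset : BSset = {z | (fun i => -(gradf z.1 i)
          - ∑ j, if hij : i ∈ I j
              then ContinuousLinearMap.adjoint (Mb j i) (z.2 j ⟨i, hij⟩) else 0)
            ∈ subdiffP pairX g z.1
        ∧ (fun j (i : {i // i ∈ I j}) => Mb j i.1 (z.1 i.1))
            ∈ subdiffP pairYY (conjP pairYY hbar) z.2})
    (G : (∀ i, Xs i) × (∀ j, Ys j) → (∀ i, Xs i) × (∀ j, {i // i ∈ I j} → Ys j))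
    (hG : ∀ z, G z = (z.1, fun j _ => z.2 j)) :
    BSset = G '' Sset := by
  have hne : ∀ j, (I j).Nonempty := fun j => card_pos.1 (hm j)
  have hMb : ∀ j i, i ∉ I j → Mb j i = 0 := fun j i => not_imp_comm.1 (hI j i).2
  obtain rfl : pairY = fun y z => ∑ j, ⟪y j, z j⟫_ℝ := funext₂ hpairY
  obtain rfl : pairYY = blockInner I := funext₂ hpairYY
  obtain rfl : hbar = h ∘ blockSum I := funext fun yy => (hhbar yy).trans <| congrArg h <|
    funext fun j => smul_inv_smul₀ (Nat.cast_ne_zero.2 (hne j).card_ne_zero) _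
  have hpre : G ⁻¹' BSset = Sset := by
    ext ⟨x, y⟩
    simp only [Set.mem_preimage, hG, hBSset, hSset, Set.mem_ofPred_eq]
    refine and_congr ?_ (mem_subdiffP_conjP_comp_blockSum_iff hne hproper (fun v => ?_) y)
    · have hadj : ∀ i, (∑ j, if i ∈ I j then (Mb j i).adjoint (y j) else 0)
          = ∑ j, (Mb j i).adjoint (y j) := fun i => sum_congr rfl fun j _ =>
        ite_eq_left_iff.2 fun hij => by simp [hMb j i hij]
      simp only [dite_eq_ite, hadj]
    · rw [blockInner_blockLift_right, blockSum_eq_sum (u := fun j i => Mb j i (x i))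
        fun j i hij => by simp [hMb j i hij]]
  have hrange : BSset ⊆ Set.range G := by
    rintro ⟨x, yy⟩ hz
    rw [hBSset] at hz
    obtain ⟨w, hw⟩ := exists_conjP_sum_inner_ne_top hproper hnebot hconv hlsc
    obtain ⟨y, rfl⟩ := mem_range_blockLift_of_mem_subdiffP hne hproper hw hz.2
    exact ⟨(x, y), hG _⟩
  rw [← hpre, Set.image_preimage_eq_of_subset hrange]

/-- (Lemma 6 of the paper.) Let `𝒮` be the set of primal-dual solutions of
`min f + g + h(M·)` and `𝑺` the set of primal-dual solutions of `min f + g + h̄(K·)`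
where `h̄ = h ∘ (D(m)S)` and `M = D(m)SK`. With `G(x,y) = (x, 𝒚)`, `𝒚^{(j)}(i) = y^{(j)}`,
one has `𝑺 = G(𝒮)`. -/
theorem stmt9 {n p : ℕ}
    (Xs : Fin n → Type) (Ys : Fin p → Type)
    [∀ i, NormedAddCommGroup (Xs i)] [∀ i, InnerProductSpace ℝ (Xs i)]
    [∀ i, FiniteDimensional ℝ (Xs i)]
    [∀ j, NormedAddCommGroup (Ys j)] [∀ j, InnerProductSpace ℝ (Ys j)]
    [∀ j, FiniteDimensional ℝ (Ys j)]
    (Mb : ∀ j i, Xs i →L[ℝ] Ys j)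
    (I : Fin p → Finset (Fin n)) (hI : ∀ j i, i ∈ I j ↔ Mb j i ≠ 0)
    (hm : ∀ j, 1 ≤ (I j).card)
    -- f convex differentiable with gradient gradf:
    (f : (∀ i, Xs i) → ℝ) (gradf : (∀ i, Xs i) → ∀ i, Xs i)
    (hf : ∀ x u, f x + ∑ i, @inner ℝ _ _ (gradf x i) (u i - x i) ≤ f u)
    -- g proper (here extended-real-valued):
    (g : (∀ i, Xs i) → EReal)
    -- h proper closed convex:
    (h : (∀ j, Ys j) → EReal)
    (hproper : ∃ y, h y ≠ ⊤) (hnebot : ∀ y, h y ≠ ⊥)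
    (hconv : ∀ (y z : ∀ j, Ys j) (t : ℝ), 0 ≤ t → t ≤ 1 →
      h (t • y + (1 - t) • z) ≤ ((t : ℝ) : EReal) * h y + (((1 - t : ℝ)) : EReal) * h z)
    (hlsc : LowerSemicontinuous h)
    -- the pairings on X, Y and 𝒀, and h̄ = h ∘ (D(m)S):
    (pairX : (∀ i, Xs i) → (∀ i, Xs i) → ℝ)
    (hpairX : ∀ x z, pairX x z = ∑ i, @inner ℝ _ _ (x i) (z i))
    (pairY : (∀ j, Ys j) → (∀ j, Ys j) → ℝ)
    (hpairY : ∀ y z, pairY y z = ∑ j, @inner ℝ _ _ (y j) (z j))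
    (pairYY : (∀ j, {i // i ∈ I j} → Ys j) → (∀ j, {i // i ∈ I j} → Ys j) → ℝ)
    (hpairYY : ∀ u v, pairYY u v = ∑ j, ∑ i ∈ (I j).attach, @inner ℝ _ _ (u j i) (v j i))
    (hbar : (∀ j, {i // i ∈ I j} → Ys j) → EReal)
    (hhbar : ∀ yy, hbar yy = h (fun j =>
      ((I j).card : ℝ) • (((I j).card : ℝ)⁻¹ • ∑ i ∈ (I j).attach, yy j i)))
    -- the two saddle-point sets and the map G:
    (Sset : Set ((∀ i, Xs i) × (∀ j, Ys j)))
    (hSset : Sset = {z | (fun i => -(gradf z.1 i)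
          - ∑ j, ContinuousLinearMap.adjoint (Mb j i) (z.2 j)) ∈ subdiffP pairX g z.1
        ∧ (fun j => ∑ i, Mb j i (z.1 i)) ∈ subdiffP pairY (conjP pairY h) z.2})
    (BSset : Set ((∀ i, Xs i) × (∀ j, {i // i ∈ I j} → Ys j)))
    (hBSset : BSset = {z | (fun i => -(gradf z.1 i)
          - ∑ j, if hij : i ∈ I j
              then ContinuousLinearMap.adjoint (Mb j i) (z.2 j ⟨i, hij⟩) else 0)
            ∈ subdiffP pairX g z.1
        ∧ (fun j (i : {i // i ∈ I j}) => Mb j i.1 (z.1 i.1))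
            ∈ subdiffP pairYY (conjP pairYY hbar) z.2})
    (G : (∀ i, Xs i) × (∀ j, Ys j) → (∀ i, Xs i) × (∀ j, {i // i ∈ I j} → Ys j))
    (hG : ∀ z, G z = (z.1, fun j _ => z.2 j)) :
    BSset = G '' Sset :=
  stmt9_general Xs Ys Mb I hI hm gradf g h hproper hnebot hconv hlsc pairX pairY hpairY pairYY
    hpairYY hbar hhbar Sset hSset BSset hBSset G hG
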